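/- arXiv:1107.1059 — 3 statements merged into one kernel-verified Lean document; each statement's English description precedes it below -/
import Mathlib

section
/- Abel–Liouville–Jacobi–Ostrogradskii identity: if W : [t₀,t₁] → M_n(ℝ) is differentiable and satisfies W'(t) = A(t)·W(t) for a continuous matrix-valued function A, then det W(t) = det W(t₀) · exp(∫_{t₀}^t trace(A(s)) ds) for all t in [t₀,t₁]. -/
attribute [local instance] Matrix.normedAddCommGroup Matrix.normedSpace



/-- The determinant as a continuous multilinear map in the rows. -/
noncomputable def detCM (n : ℕ) :
    ContinuousMultilinearMap ℝ (fun _ : Fin n => (Fin n → ℝ)) ℝ :=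
  (Matrix.detRowAlternating (n := Fin n) (R := ℝ)).toMultilinearMap.mkContinuous
    (n.factorial) (by
      intro m
      show |Matrix.detRowAlternating (R := ℝ) (Matrix.of m)| ≤ _
      rw [show Matrix.detRowAlternating (R := ℝ) (Matrix.of m) = (Matrix.of m).det from rfl,
        Matrix.det_apply]
      calc |∑ σ : Equiv.Perm (Fin n), Equiv.Perm.sign σ • ∏ i, Matrix.of m (σ i) i|
          ≤ ∑ σ : Equiv.Perm (Fin n), |Equiv.Perm.sign σ • ∏ i, Matrix.of m (σ i) i| :=
            Finset.abs_sum_le_sum_abs _ _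
        _ ≤ ∑ σ : Equiv.Perm (Fin n), ∏ i, ‖m i‖ := by
            apply Finset.sum_le_sum
            intro σ _
            have habs : |Equiv.Perm.sign σ • ∏ i, Matrix.of m (σ i) i|
                = |∏ i, Matrix.of m (σ i) i| := by
              rcases Int.units_eq_one_or (Equiv.Perm.sign σ) with h | h <;>
                simp [h, Units.smul_def]
            rw [habs, Finset.abs_prod]
            calc ∏ i, |Matrix.of m (σ i) i|
                ≤ ∏ i, ‖m (σ i)‖ := by
                  apply Finset.prod_le_prod (fun i _ => abs_nonneg _)
                  intro i _
                  exact norm_le_pi_norm (m (σ i)) i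
              _ = ∏ i, ‖m i‖ := Equiv.prod_comp σ (fun i => ‖m i‖)
        _ = (n.factorial : ℝ) * ∏ i, ‖m i‖ := by
            rw [Finset.sum_const, Finset.card_univ, Fintype.card_perm]
            simp [nsmul_eq_mul])

lemma detCM_apply {n : ℕ} (m : Fin n → Fin n → ℝ) :
    detCM n m = Matrix.det (Matrix.of m) := rfl

lemma jacobi {n : ℕ} (W : ℝ → Matrix (Fin n) (Fin n) ℝ) (B : Matrix (Fin n) (Fin n) ℝ) (t : ℝ)
    (hW : HasDerivAt W (B * W t) t) :
    HasDerivAt (fun s => (W s).det) (B.trace * (W t).det) t := by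
  have h1 : HasDerivAt (fun s => detCM n (W s)) (((detCM n).linearDeriv (W t)) (B * W t)) t :=
    ((detCM n).hasFDerivAt (W t)).comp_hasDerivAt t hW
  have h2 : (((detCM n).linearDeriv (W t)) (B * W t)) = B.trace * (W t).det := by
    erw [ContinuousMultilinearMap.linearDeriv_apply]
    have hrow : ∀ i : Fin n, (B * W t) i = ∑ j : Fin n, B i j • (W t) j := by
      intro i; ext k
      simp [Matrix.mul_apply, Finset.sum_apply]
    calc ∑ i, detCM n (Function.update (W t) i ((B * W t) i))
        = ∑ i, ∑ j, B i j • detCM n (Function.update (W t) i ((W t) j)) := by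
          refine Finset.sum_congr rfl fun i _ => ?_
          rw [hrow i]
          refine ((detCM n).toMultilinearMap.map_update_sum Finset.univ i
            (fun j => B i j • (W t) j) (W t)).trans ?_
          exact Finset.sum_congr rfl fun j _ =>
            (detCM n).toMultilinearMap.map_update_smul (W t) i (B i j) ((W t) j)
      _ = ∑ i, B i i * (W t).det := by
          refine Finset.sum_congr rfl fun i _ => ?_
          rw [Finset.sum_eq_single_of_mem i (Finset.mem_univ i)]
          · erw [Function.update_eq_self, smul_eq_mul,
              show detCM n (W t) = (W t).det from rfl]
          · intro j _ hj
            have hz : detCM n (Function.update (W t) i ((W t) j)) = 0 :=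
              (Matrix.detRowAlternating (n := Fin n) (R := ℝ)).map_eq_zero_of_eq
                (Function.update (W t) i ((W t) j))
                (i := i) (j := j)
                (by erw [Function.update_self, Function.update_of_ne hj]) (Ne.symm hj)
            rw [hz, smul_zero]
      _ = B.trace * (W t).det := by
          rw [Matrix.trace, Finset.sum_mul]; rfl
  rw [h2] at h1
  exact h1

/-- Abel–Liouville–Jacobi–Ostrogradskii identity. -/
theorem abel_liouville_jacobi_ostrogradskii {n : ℕ} {t₀ t₁ : ℝ}
    (A W : ℝ → Matrix (Fin n) (Fin n) ℝ)
    (hA : ContinuousOn A (Set.Icc t₀ t₁))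
    (hW : ∀ t ∈ Set.Icc t₀ t₁, HasDerivAt W (A t * W t) t) :
    ∀ t ∈ Set.Icc t₀ t₁,
      (W t).det = (W t₀).det * Real.exp (∫ s in t₀..t, (A s).trace) := by
  intro t ht
  have h01 : t₀ ≤ t₁ := le_trans ht.1 ht.2
  -- continuous extension of the trace of A
  set c : ℝ → ℝ := fun s => (A (Set.projIcc t₀ t₁ h01 s)).trace with hc_def
  have hc : Continuous c := by
    have h1 : Continuous fun s : ℝ => (A (Set.projIcc t₀ t₁ h01 s) : Matrix (Fin n) (Fin n) ℝ) :=
      hA.comp_continuous (continuous_subtype_val.comp (continuous_projIcc))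
        (fun x => (Set.projIcc t₀ t₁ h01 x).2)
    have h2 : Continuous fun M : Matrix (Fin n) (Fin n) ℝ => M.trace := by
      simp only [Matrix.trace]
      exact continuous_finset_sum _ fun i _ => (continuous_apply i).comp (continuous_apply i)
    exact h2.comp h1
  have hceq : ∀ s ∈ Set.Icc t₀ t₁, c s = (A s).trace := by
    intro s hs; simp [hc_def, Set.projIcc_of_mem h01 hs]
  set F : ℝ → ℝ := fun u => ∫ s in t₀..u, c s with hF_def
  have hF : ∀ u : ℝ, HasDerivAt F (c u) u := fun u =>
    intervalIntegral.integral_hasDerivAt_right (hc.intervalIntegrable t₀ u)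
      hc.stronglyMeasurable.stronglyMeasurableAtFilter hc.continuousAt
  -- the auxiliary function
  set g : ℝ → ℝ := fun u => (W u).det * Real.exp (-F u) with hg_def
  have hg : ∀ u ∈ Set.Icc t₀ t₁, HasDerivAt g 0 u := by
    intro u hu
    have hdet : HasDerivAt (fun s => (W s).det) ((A u).trace * (W u).det) u :=
      jacobi W (A u) u (hW u hu)
    have hexp : HasDerivAt (fun s => Real.exp (-F s)) (Real.exp (-F u) * -(c u)) u :=
      ((hF u).neg).exp
    have := (hdet.mul hexp : HasDerivAt (fun s => (W s).det * Real.exp (-F s)) _ u)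
    refine this.congr_deriv ?_
    rw [hceq u hu]; ring
  have hcont : ContinuousOn g (Set.Icc t₀ t₁) :=
    fun u hu => ((hg u hu).continuousAt).continuousWithinAt
  have hconst : ∀ u ∈ Set.Icc t₀ t₁, g u = g t₀ := by
    apply constant_of_has_deriv_right_zero hcont
    intro u hu
    exact ((hg u (Set.mem_Icc_of_Ico hu)).hasDerivWithinAt)
  have hgt := hconst t ht
  have hF0 : F t₀ = 0 := intervalIntegral.integral_same
  have hFt : F t = ∫ s in t₀..t, (A s).trace := by
    apply intervalIntegral.integral_congr
    intro s hs
    apply hceq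
    have : Set.uIcc t₀ t ⊆ Set.Icc t₀ t₁ := by
      rw [Set.uIcc_of_le ht.1]
      exact Set.Icc_subset_Icc le_rfl ht.2
    exact this hs
  have : (W t).det * Real.exp (-F t) = (W t₀).det := by
    simpa [hg_def, hF0] using hgt
  have hdet : (W t).det = (W t₀).det * Real.exp (F t) := by
    have h := congrArg (fun x => x * Real.exp (F t)) this
    simpa [mul_assoc, ← Real.exp_add] using h
  rw [hdet, hFt]
end

section
/- Let A be a complex unital Banach algebra, τ : A → E a tracial continuous linear map, and ξ : [a,b] → A^× a C¹ path with ‖ξ(α) - 1‖ < 1 for all α. Then α ↦ τ(log ξ(α)) is differentiable with derivative τ(ξ'(α)·ξ(α)^{-1}); consequently ∫_a^b τ(ξ'(α) ξ(α)^{-1}) dα = τ(log ξ(b)) - τ(log ξ(a)). -/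
/-- The logarithm `log x = ∑_{k≥1} (-1)^{k-1}(x-1)^k/k`, for `‖x - 1‖ < 1`. -/
noncomputable def banachLog {A : Type*} [NormedRing A] [NormedAlgebra ℂ A] (x : A) : A :=
  ∑' k : ℕ, ((-1 : ℂ) ^ k / (k + 1)) • (x - 1) ^ (k + 1)

open ContinuousLinearMap Finset

section aux
variable {A E : Type*} [NormedRing A] [NormedAlgebra ℂ A] [CompleteSpace A]
  [NormedAddCommGroup E] [NormedSpace ℂ E] [CompleteSpace E]

noncomputable def mulR (c : A) : A →L[ℂ] A := (ContinuousLinearMap.mul ℂ A).flip c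

@[simp] lemma mulR_apply (c v : A) : mulR c v = v * c := rfl

lemma norm_mulR_le (c : A) : ‖mulR (A := A) c‖ ≤ ‖c‖ := by
  refine opNorm_le_bound _ (norm_nonneg c) fun v => ?_
  rw [mulR_apply, mul_comm ‖c‖]
  exact norm_mul_le v c

omit [NormedAlgebra ℂ A] [CompleteSpace A] in
lemma norm_pow_le_C (y : A) (n : ℕ) : ‖y ^ n‖ ≤ max 1 ‖(1 : A)‖ * ‖y‖ ^ n := by
  cases n with
  | zero => simpa using le_max_right 1 ‖(1 : A)‖
  | succ n =>
      calc ‖y ^ (n + 1)‖ ≤ ‖y‖ ^ (n + 1) := norm_pow_le' y (Nat.succ_pos n)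
        _ ≤ max 1 ‖(1 : A)‖ * ‖y‖ ^ (n + 1) :=
            le_mul_of_one_le_left (by positivity) (le_max_left _ _)

lemma norm_logCoeff_le (n : ℕ) : ‖(-1 : ℂ) ^ n / (n + 1)‖ ≤ 1 := by
  rw [norm_div, norm_pow, norm_neg, norm_one, one_pow]
  have hn : ‖((n : ℂ) + 1)‖ = (n : ℝ) + 1 := by
    rw [show ((n : ℂ) + 1) = ((n + 1 : ℕ) : ℂ) by push_cast; ring, Complex.norm_natCast]
    push_cast; ring
  rw [hn, div_le_one (by positivity)]
  linarith [Nat.cast_nonneg (α := ℝ) n]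

/-- derivative of `x ↦ (x-1)^n`. -/
lemma hasFDerivAt_sub_one_pow (n : ℕ) (x₀ : A) :
    HasFDerivAt (fun x : A => (x - 1) ^ n)
      (∑ i ∈ Finset.range n,
        (ContinuousLinearMap.mul ℂ A ((x₀ - 1) ^ i)).comp (mulR ((x₀ - 1) ^ (n - 1 - i)))) x₀ := by
  induction n with
  | zero =>
      simpa using hasFDerivAt_const (1 : A) x₀
  | succ n ih =>
      have hd : HasFDerivAt (fun x : A => x - 1) (ContinuousLinearMap.id ℂ A) x₀ :=
        (hasFDerivAt_id x₀).sub_const 1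
      have h : HasFDerivAt (fun x : A => (x - 1) ^ n * (x - 1)) _ x₀ := ih.mul' hd
      have he : (fun x : A => (x - 1) ^ n * (x - 1)) = fun x : A => (x - 1) ^ (n + 1) := by
        funext x; rw [← pow_succ]
      rw [he] at h
      convert h using 1
      ext v
      simp only [ContinuousLinearMap.add_apply, ContinuousLinearMap.smul_apply,
        ContinuousLinearMap.smulRight_apply, ContinuousLinearMap.coe_comp', Function.comp_apply,
        mulR_apply, ContinuousLinearMap.coe_sum', Finset.sum_apply,
        ContinuousLinearMap.coe_id', id_eq, smul_eq_mul, ContinuousLinearMap.mul_apply',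
        op_smul_eq_mul]
      have e1 : n + 1 - 1 - n = 0 := by omega
      rw [Finset.sum_range_succ, e1, pow_zero, mul_one, Finset.sum_mul, add_comm]
      congr 1
      apply Finset.sum_congr rfl
      intro i hi
      have : n + 1 - 1 - i = (n - 1 - i) + 1 := by
        simp at hi; omega
      rw [this, pow_succ, mul_assoc, mul_assoc]

omit [NormedAlgebra ℂ A] in
lemma inverse_eq_tsum {x : A} (h : ‖1 - x‖ < 1) :
    Ring.inverse x = ∑' n : ℕ, (1 - x) ^ n := by
  have := NormedRing.inverse_one_sub (1 - x) h
  rw [sub_sub_cancel] at this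
  rw [this]; rfl

lemma summable_logSeries {x : A} (h : ‖x - 1‖ < 1) :
    Summable fun n : ℕ => ((-1 : ℂ) ^ n / (n + 1)) • (x - 1) ^ (n + 1) := by
  apply Summable.of_norm_bounded (g := fun n => ‖x - 1‖ ^ (n + 1))
  · exact (summable_geometric_of_lt_one (norm_nonneg _) h).comp_injective
      (add_left_injective 1)
  · intro n
    rw [norm_smul]
    calc ‖(-1 : ℂ) ^ n / (n + 1)‖ * ‖(x - 1) ^ (n + 1)‖
        ≤ 1 * ‖x - 1‖ ^ (n + 1) :=
          mul_le_mul (norm_logCoeff_le n) (norm_pow_le' _ (Nat.succ_pos n))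
            (norm_nonneg _) zero_le_one
      _ = ‖x - 1‖ ^ (n + 1) := one_mul _

lemma key_hasFDerivAt (τ : A →L[ℂ] E) (hτ : ∀ x y : A, τ (x * y) = τ (y * x))
    {x₀ : A} (h : ‖x₀ - 1‖ < 1) :
    HasFDerivAt (fun x => τ (banachLog x)) (τ.comp (mulR (Ring.inverse x₀))) x₀ := by
  set r : ℝ := (1 + ‖x₀ - 1‖) / 2 with hr
  have hr0 : 0 ≤ r := by positivity
  have hr1 : r < 1 := by rw [hr]; linarith
  have hx₀r : ‖x₀ - 1‖ < r := by rw [hr]; linarith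
  set s : Set A := Metric.ball (1 : A) r with hs
  have hmem : ∀ {x : A}, x ∈ s → ‖x - 1‖ < r := by
    intro x hx; rwa [hs, Metric.mem_ball, dist_eq_norm] at hx
  have hx₀s : x₀ ∈ s := by rw [hs, Metric.mem_ball, dist_eq_norm]; exact hx₀r
  set C : ℝ := max 1 ‖(1 : A)‖ with hC
  have hC1 : 1 ≤ C := le_max_left _ _
  set f : ℕ → A → E := fun n x => ((-1 : ℂ) ^ n / (n + 1)) • τ ((x - 1) ^ (n + 1)) with hf_def
  set f' : ℕ → A → (A →L[ℂ] E) := fun n x => ((-1 : ℂ) ^ n) • (τ.comp (mulR ((x - 1) ^ n)))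
    with hf'_def
  have hu : Summable fun n : ℕ => ‖τ‖ * C * r ^ n :=
    (summable_geometric_of_lt_one hr0 hr1).mul_left _
  -- each term is differentiable with the claimed (trace-simplified) derivative
  have hf : ∀ n (x : A), x ∈ s → HasFDerivAt (f n) (f' n x) x := by
    intro n x _
    have h1 := hasFDerivAt_sub_one_pow (A := A) (n + 1) x
    have h2 : HasFDerivAt (f n) _ x := (τ.hasFDerivAt.comp x h1).const_smul ((-1 : ℂ) ^ n / (n + 1))
    convert h2 using 1
    ext v
    simp only [hf'_def, ContinuousLinearMap.smul_apply, ContinuousLinearMap.coe_comp',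
      Function.comp_apply, mulR_apply, ContinuousLinearMap.coe_sum', Finset.sum_apply,
      ContinuousLinearMap.mul_apply', map_sum]
    have e : ∀ i ∈ Finset.range (n + 1),
        τ ((x - 1) ^ i * (v * (x - 1) ^ (n + 1 - 1 - i))) = τ (v * (x - 1) ^ n) := by
      intro i hi
      rw [hτ, mul_assoc, ← pow_add]
      congr 3
      simp at hi; omega
    rw [Finset.sum_congr rfl e, Finset.sum_const, Finset.card_range, ← Nat.cast_smul_eq_nsmul ℂ,
      smul_smul, div_mul_eq_mul_div, Nat.cast_add, Nat.cast_one, mul_div_assoc,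
      div_self (by exact_mod_cast Nat.succ_ne_zero n), mul_one]
  -- summable bound for the derivatives on `s`
  have hf' : ∀ n (x : A), x ∈ s → ‖f' n x‖ ≤ ‖τ‖ * C * r ^ n := by
    intro n x hx
    simp only [hf'_def]
    refine opNorm_le_bound _
      (mul_nonneg (mul_nonneg (norm_nonneg τ) (by linarith)) (pow_nonneg hr0 n)) fun v => ?_
    rw [ContinuousLinearMap.smul_apply, norm_smul, norm_pow, norm_neg, norm_one, one_pow, one_mul,
      ContinuousLinearMap.coe_comp', Function.comp_apply, mulR_apply]
    calc ‖τ (v * (x - 1) ^ n)‖ ≤ ‖τ‖ * ‖v * (x - 1) ^ n‖ := τ.le_opNorm _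
      _ ≤ ‖τ‖ * (‖v‖ * ‖(x - 1) ^ n‖) :=
          mul_le_mul_of_nonneg_left (norm_mul_le _ _) (norm_nonneg τ)
      _ ≤ ‖τ‖ * (‖v‖ * (C * ‖x - 1‖ ^ n)) := by
          apply mul_le_mul_of_nonneg_left _ (norm_nonneg τ)
          exact mul_le_mul_of_nonneg_left (norm_pow_le_C _ _) (norm_nonneg v)
      _ ≤ ‖τ‖ * (‖v‖ * (C * r ^ n)) := by
          apply mul_le_mul_of_nonneg_left _ (norm_nonneg τ)
          apply mul_le_mul_of_nonneg_left _ (norm_nonneg v)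
          apply mul_le_mul_of_nonneg_left _ (by linarith)
          exact pow_le_pow_left₀ (norm_nonneg _) (le_of_lt (hmem hx)) n
      _ = ‖τ‖ * C * r ^ n * ‖v‖ := by ring
  have hf0 : Summable fun n => f n x₀ := by
    have hsum := summable_logSeries (A := A) h
    have h2 := hsum.map τ τ.continuous
    apply h2.congr
    intro n
    simp only [hf_def, Function.comp_apply, map_smul]
  have main := hasFDerivAt_tsum_of_isPreconnected hu Metric.isOpen_ball
    (convex_ball (1 : A) r).isPreconnected hf hf' hx₀s hf0 hx₀s
  -- identify the sum of the derivatives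
  have hSf' : Summable fun n => f' n x₀ :=
    Summable.of_norm_bounded hu (fun n => hf' n x₀ hx₀s)
  have h1x : ‖1 - x₀‖ < 1 := by rwa [norm_sub_rev]
  have hgeo : Summable fun n : ℕ => (1 - x₀) ^ n :=
    summable_geometric_of_norm_lt_one h1x
  have hderiv_eq : (∑' n, f' n x₀) = τ.comp (mulR (Ring.inverse x₀)) := by
    ext v
    have happ : (∑' n, f' n x₀) v = ∑' n, f' n x₀ v :=
      (ContinuousLinearMap.apply ℂ E v).map_tsum hSf'
    rw [happ]
    have term : ∀ n : ℕ, f' n x₀ v = τ (v * (1 - x₀) ^ n) := by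
      intro n
      simp only [hf'_def, ContinuousLinearMap.smul_apply, ContinuousLinearMap.coe_comp',
        Function.comp_apply, mulR_apply]
      rw [← map_smul, ← mul_smul_comm, ← smul_pow]
      congr 3
      rw [neg_smul, one_smul, neg_sub]
    rw [tsum_congr term, ← τ.map_tsum (hgeo.mul_left v), ContinuousLinearMap.coe_comp',
      Function.comp_apply, mulR_apply, hgeo.tsum_mul_left]
    rw [inverse_eq_tsum h1x]
  rw [hderiv_eq] at main
  -- the function equals `τ ∘ banachLog` near `x₀`
  have hev : (fun y => ∑' n, f n y) =ᶠ[nhds x₀] fun x => τ (banachLog x) := by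
    have hball : Metric.ball (1 : A) 1 ∈ nhds x₀ := Metric.isOpen_ball.mem_nhds
      (by rw [Metric.mem_ball, dist_eq_norm]; exact h)
    filter_upwards [hball] with y hy
    have hy1 : ‖y - 1‖ < 1 := by rwa [Metric.mem_ball, dist_eq_norm] at hy
    rw [banachLog, τ.map_tsum (summable_logSeries hy1)]
    exact tsum_congr fun n => by simp only [hf_def, map_smul]
  exact hev.hasFDerivAt_iff.mp main

end aux

/-- `α ↦ τ(log ξ(α))` is a primitive of `τ(ξ'(α) ξ(α)⁻¹)`, and the fundamental theorem
of calculus consequence. -/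
theorem trace_log_primitive {A E : Type*} [NormedRing A] [NormedAlgebra ℂ A]
    [CompleteSpace A] [NormedAddCommGroup E] [NormedSpace ℂ E] [CompleteSpace E]
    (τ : A →L[ℂ] E) (hτ : ∀ x y : A, τ (x * y) = τ (y * x))
    {a b : ℝ} (hab : a ≤ b) (ξ D : ℝ → A)
    (hξ : ∀ α ∈ Set.Icc a b, IsUnit (ξ α))
    (hnorm : ∀ α ∈ Set.Icc a b, ‖ξ α - 1‖ < 1)
    (hD : ∀ α ∈ Set.Icc a b, HasDerivAt ξ (D α) α)
    (hc : ContinuousOn D (Set.Icc a b)) :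
    (∀ α ∈ Set.Icc a b,
        HasDerivAt (fun s => τ (banachLog (ξ s))) (τ (D α * Ring.inverse (ξ α))) α) ∧
      (∫ α in a..b, τ (D α * Ring.inverse (ξ α))) =
        τ (banachLog (ξ b)) - τ (banachLog (ξ a)) := by
  have part1 : ∀ α ∈ Set.Icc a b,
      HasDerivAt (fun s => τ (banachLog (ξ s))) (τ (D α * Ring.inverse (ξ α))) α := by
    intro α hα
    have hkey := key_hasFDerivAt τ hτ (hnorm α hα)
    have h2 := (hkey.restrictScalars ℝ).comp_hasDerivAt α (hD α hα)
    exact h2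
  refine ⟨part1, ?_⟩
  have hIcc : Set.uIcc a b = Set.Icc a b := Set.uIcc_of_le hab
  refine intervalIntegral.integral_eq_sub_of_hasDerivAt (f := fun s => τ (banachLog (ξ s)))
    (fun α hα => ?_) ?_
  · rw [hIcc] at hα; exact part1 α hα
  · apply ContinuousOn.intervalIntegrable
    rw [hIcc]
    have hξc : ContinuousOn ξ (Set.Icc a b) := fun α hα =>
      (hD α hα).continuousAt.continuousWithinAt
    have hinv : ContinuousOn (fun α => Ring.inverse (ξ α)) (Set.Icc a b) := by
      intro α hα
      have h1 : ContinuousAt Ring.inverse (ξ α) := by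
        have h2 := NormedRing.inverse_continuousAt (hξ α hα).unit
        rwa [IsUnit.unit_spec] at h2
      exact h1.comp_continuousWithinAt (hξc α hα)
    exact τ.continuous.comp_continuousOn (hc.mul hinv)
end

section
/- Let C : 0 → C_n → … → C_0 → 0 be a chain complex of finite-dimensional vector spaces over a field k which is acyclic (exact), and let δ be a chain contraction (δd + dδ = 1). Then the map d + δ restricted to C_odd = C_1 ⊕ C_3 ⊕ … is a linear isomorphism onto C_even = C_0 ⊕ C_2 ⊕ …. -/
open DirectSum

section Aux

variable (k : Type*) [Field k] (V : ℕ → Type*) [∀ i, AddCommGroup (V i)] [∀ i, Module k (V i)]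
  (d : ∀ i, V (i + 1) →ₗ[k] V i) (δ : ∀ i, V i →ₗ[k] V (i + 1))

/-- The map `d + δ : C_odd → C_even`. -/
def auxD : (⨁ i : ℕ, V (2 * i + 1)) →ₗ[k] ⨁ j : ℕ, V (2 * j) :=
  DirectSum.toModule k ℕ (⨁ j : ℕ, V (2 * j))
    (fun i => ((DirectSum.lof k ℕ (fun j => V (2 * j)) i).comp (d (2 * i))) +
      ((DirectSum.lof k ℕ (fun j => V (2 * j)) (i + 1)).comp (δ (2 * i + 1))))

/-- Components of the map `d + δ : C_even → C_odd`. -/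
def auxEcomp : ∀ j : ℕ, V (2 * j) →ₗ[k] ⨁ i : ℕ, V (2 * i + 1)
  | 0 => (DirectSum.lof k ℕ (fun i => V (2 * i + 1)) 0).comp (δ 0)
  | (j + 1) => (DirectSum.lof k ℕ (fun i => V (2 * i + 1)) (j + 1)).comp (δ (2 * j + 2)) +
      (DirectSum.lof k ℕ (fun i => V (2 * i + 1)) j).comp (d (2 * j + 1))

/-- The map `d + δ : C_even → C_odd`. -/
def auxE : (⨁ j : ℕ, V (2 * j)) →ₗ[k] ⨁ i : ℕ, V (2 * i + 1) :=
  DirectSum.toModule k ℕ (⨁ i : ℕ, V (2 * i + 1)) (auxEcomp k V d δ)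

/-- The odd shift `δ ∘ δ`. -/
def auxT : (⨁ i : ℕ, V (2 * i + 1)) →ₗ[k] ⨁ i : ℕ, V (2 * i + 1) :=
  DirectSum.toModule k ℕ (⨁ i : ℕ, V (2 * i + 1))
    (fun i => (DirectSum.lof k ℕ (fun i => V (2 * i + 1)) (i + 1)).comp
      ((δ (2 * i + 2)).comp (δ (2 * i + 1))))

/-- The even shift `δ ∘ δ`. -/
def auxS : (⨁ j : ℕ, V (2 * j)) →ₗ[k] ⨁ j : ℕ, V (2 * j) :=
  DirectSum.toModule k ℕ (⨁ j : ℕ, V (2 * j))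
    (fun j => (DirectSum.lof k ℕ (fun j => V (2 * j)) (j + 1)).comp
      ((δ (2 * j + 1)).comp (δ (2 * j))))

theorem auxD_lof (i : ℕ) (x : V (2 * i + 1)) :
    auxD k V d δ (DirectSum.lof k ℕ (fun i => V (2 * i + 1)) i x) =
      DirectSum.lof k ℕ (fun j => V (2 * j)) i (d (2 * i) x) +
        DirectSum.lof k ℕ (fun j => V (2 * j)) (i + 1) (δ (2 * i + 1) x) :=
  DirectSum.toModule_lof (M := fun i => V (2 * i + 1)) k i x

theorem auxE_lof0 (y : V (2 * 0)) :
    auxE k V d δ (DirectSum.lof k ℕ (fun j => V (2 * j)) 0 y) =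
      DirectSum.lof k ℕ (fun i => V (2 * i + 1)) 0 (δ (2 * 0) y) :=
  DirectSum.toModule_lof (M := fun j => V (2 * j)) k 0 y

theorem auxE_lofS (j : ℕ) (y : V (2 * (j + 1))) :
    auxE k V d δ (DirectSum.lof k ℕ (fun j => V (2 * j)) (j + 1) y) =
      DirectSum.lof k ℕ (fun i => V (2 * i + 1)) (j + 1) (δ (2 * (j + 1)) y) +
        DirectSum.lof k ℕ (fun i => V (2 * i + 1)) j (d (2 * j + 1) y) :=
  DirectSum.toModule_lof (M := fun j => V (2 * j)) k (j + 1) y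

theorem auxT_lof (i : ℕ) (x : V (2 * i + 1)) :
    auxT k V δ (DirectSum.lof k ℕ (fun i => V (2 * i + 1)) i x) =
      DirectSum.lof k ℕ (fun i => V (2 * i + 1)) (i + 1) (δ (2 * (i + 1)) (δ (2 * i + 1) x)) :=
  DirectSum.toModule_lof (M := fun i => V (2 * i + 1)) k i x

theorem auxS_lof (j : ℕ) (y : V (2 * j)) :
    auxS k V δ (DirectSum.lof k ℕ (fun j => V (2 * j)) j y) =
      DirectSum.lof k ℕ (fun j => V (2 * j)) (j + 1) (δ (2 * j + 1) (δ (2 * j) y)) :=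
  DirectSum.toModule_lof (M := fun j => V (2 * j)) k j y

end Aux

/-- For an acyclic chain complex `0 → C_n → … → C_0 → 0` of finite-dimensional vector
spaces with chain contraction `δ` (`δd + dδ = 1`), the map `d + δ` restricted to
`C_odd = C_1 ⊕ C_3 ⊕ …` is a linear isomorphism onto `C_even = C_0 ⊕ C_2 ⊕ …`. -/
theorem dPlusDelta_bijective (k : Type*) [Field k] (n : ℕ)
    (V : ℕ → Type*) [∀ i, AddCommGroup (V i)] [∀ i, Module k (V i)]
    [∀ i, FiniteDimensional k (V i)]
    (hbound : ∀ i, n < i → Subsingleton (V i))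
    (d : ∀ i, V (i + 1) →ₗ[k] V i)
    (hdd : ∀ i, (d i).comp (d (i + 1)) = 0)
    (hexact : ∀ i, LinearMap.range (d (i + 1)) = LinearMap.ker (d i))
    (hsurj : Function.Surjective (d 0))
    (δ : ∀ i, V i →ₗ[k] V (i + 1))
    (hcontr0 : (d 0).comp (δ 0) = LinearMap.id)
    (hcontr : ∀ i, (d (i + 1)).comp (δ (i + 1)) + (δ i).comp (d i) = LinearMap.id) :
    Function.Bijective
      (DirectSum.toModule k ℕ (⨁ i : ℕ, V (2 * i))
        (fun i =>
          ((DirectSum.lof k ℕ (fun j => V (2 * j)) i).comp (d (2 * i))) +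
            ((DirectSum.lof k ℕ (fun j => V (2 * j)) (i + 1)).comp (δ (2 * i + 1))) :
          ∀ i : ℕ, V (2 * i + 1) →ₗ[k] ⨁ j : ℕ, V (2 * j))) := by
  classical
  show Function.Bijective (auxD k V d δ)
  -- key identity 1 : E ∘ D = 1 + T
  have hED : auxE k V d δ ∘ₗ auxD k V d δ = LinearMap.id + auxT k V δ := by
    refine DirectSum.linearMap_ext k fun i => ?_
    ext x
    rcases i with _ | i
    · have h : d (2 * 0 + 1) (δ (2 * 0 + 1) x) + δ (2 * 0) (d (2 * 0) x) = x :=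
        LinearMap.congr_fun (hcontr 0) x
      have h' := congrArg (DirectSum.lof k ℕ (fun i => V (2 * i + 1)) 0) h
      rw [map_add] at h'
      simp only [LinearMap.comp_apply, LinearMap.add_apply, LinearMap.id_apply,
        auxD_lof, map_add, auxE_lof0, auxE_lofS, auxT_lof]
      rw [← h']
      abel
    · have h : d (2 * (i + 1) + 1) (δ (2 * (i + 1) + 1) x) + δ (2 * (i + 1)) (d (2 * (i + 1)) x)
          = x := LinearMap.congr_fun (hcontr (2 * i + 2)) x
      have h' := congrArg (DirectSum.lof k ℕ (fun i => V (2 * i + 1)) (i + 1)) h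
      rw [map_add] at h'
      have hdd' : d (2 * i + 1) (d (2 * (i + 1)) x) = 0 :=
        LinearMap.congr_fun (hdd (2 * i + 1)) x
      simp only [LinearMap.comp_apply, LinearMap.add_apply, LinearMap.id_apply,
        auxD_lof, map_add, auxE_lofS, auxT_lof]
      rw [hdd', map_zero, add_zero, ← h']
      abel
  -- key identity 2 : D ∘ E = 1 + S
  have hDE : auxD k V d δ ∘ₗ auxE k V d δ = LinearMap.id + auxS k V δ := by
    refine DirectSum.linearMap_ext k fun j => ?_
    ext y
    rcases j with _ | j
    · have h : d (2 * 0) (δ (2 * 0) y) = y := LinearMap.congr_fun hcontr0 y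
      simp only [LinearMap.comp_apply, LinearMap.add_apply, LinearMap.id_apply,
        auxE_lof0, auxD_lof, map_add, auxS_lof]
      rw [h]
    · have h' : DirectSum.lof k ℕ (fun j => V (2 * j)) (j + 1) (d (2 * (j + 1)) (δ (2 * (j + 1)) y))
          + DirectSum.lof k ℕ (fun j => V (2 * j)) (j + 1) (δ (2 * j + 1) (d (2 * j + 1) y))
          = DirectSum.lof k ℕ (fun j => V (2 * j)) (j + 1) y := by
        rw [← map_add]
        exact congrArg _ (LinearMap.congr_fun (hcontr (2 * j + 1)) y)
      have hdd' : d (2 * j) (d (2 * j + 1) y) = 0 :=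
        LinearMap.congr_fun (hdd (2 * j)) y
      simp only [LinearMap.comp_apply, LinearMap.add_apply, LinearMap.id_apply,
        auxE_lofS, map_add, auxD_lof, auxS_lof]
      rw [hdd', map_zero, zero_add, ← h']
      abel
  -- nilpotency of the shifts
  have hTn : ∀ (m i : ℕ) (x : V (2 * i + 1)), n < 2 * i + 2 * m →
      (auxT k V δ ^ m) (DirectSum.lof k ℕ (fun i => V (2 * i + 1)) i x) = 0 := by
    intro m
    induction m with
    | zero =>
      intro i x hx
      have : Subsingleton (V (2 * i + 1)) := hbound _ (by omega)
      rw [Subsingleton.elim x 0, map_zero]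
      simp
    | succ m ih =>
      intro i x hx
      rw [pow_succ, Module.End.mul_apply, auxT_lof]
      exact ih (i + 1) _ (by omega)
  have hSn : ∀ (m j : ℕ) (y : V (2 * j)), n < 2 * j + 2 * m →
      (auxS k V δ ^ m) (DirectSum.lof k ℕ (fun j => V (2 * j)) j y) = 0 := by
    intro m
    induction m with
    | zero =>
      intro j y hy
      have : Subsingleton (V (2 * j)) := hbound _ (by omega)
      rw [Subsingleton.elim y 0, map_zero]
      simp
    | succ m ih =>
      intro j y hy
      rw [pow_succ, Module.End.mul_apply, auxS_lof]
      exact ih (j + 1) _ (by omega)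
  have hTnil : IsNilpotent (auxT k V δ) := by
    refine ⟨n + 1, ?_⟩
    refine DirectSum.linearMap_ext k fun i => ?_
    ext x : 1
    simp only [LinearMap.comp_apply, LinearMap.zero_apply, LinearMap.zero_comp]
    exact hTn (n + 1) i x (by omega)
  have hSnil : IsNilpotent (auxS k V δ) := by
    refine ⟨n + 1, ?_⟩
    refine DirectSum.linearMap_ext k fun j => ?_
    ext y : 1
    simp only [LinearMap.comp_apply, LinearMap.zero_apply, LinearMap.zero_comp]
    exact hSn (n + 1) j y (by omega)
  -- conclude
  have hEDbij : Function.Bijective (auxE k V d δ ∘ₗ auxD k V d δ) := by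
    rw [hED]
    exact (Module.End.isUnit_iff _).mp hTnil.isUnit_one_add
  have hDEbij : Function.Bijective (auxD k V d δ ∘ₗ auxE k V d δ) := by
    rw [hDE]
    exact (Module.End.isUnit_iff _).mp hSnil.isUnit_one_add
  constructor
  · intro a b hab
    exact hEDbij.injective (by simp only [LinearMap.comp_apply, hab])
  · intro y
    obtain ⟨z, hz⟩ := hDEbij.surjective y
    exact ⟨auxE k V d δ z, hz⟩
end
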